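/- arXiv:1603.01601 — 4 statements merged into one kernel-verified Lean document; each statement's English description precedes it below -/
import Mathlib

section
/- Let r > 0, a ∈ ℝ, and define A(t,s) = e^{2s+2t} + (a−r)² e^{2s} + e^{2t} + (a+r)² and φ(t,s) = arcosh(A(t,s)/(4r e^{s+t})). Then ∂²φ/∂s∂t = 16 r e^{2s+2t} (a + r + (a−r)e^{2s})(a² − r² + e^{2t}) / (A² − 16 r² e^{2s+2t})^{3/2} at all points where A² − 16 r² e^{2s+2t} > 0. -/
/-- Inverse hyperbolic cosine: `arcosh x = log (x + √(x² − 1))`. -/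
noncomputable def arcosh (x : ℝ) : ℝ := Real.log (x + Real.sqrt (x ^ 2 - 1))

/-- `A(t,s) = e^{2s+2t} + (a−r)²e^{2s} + e^{2t} + (a+r)²`. -/
noncomputable def Afun (r a t s : ℝ) : ℝ :=
  Real.exp (2 * s + 2 * t) + (a - r) ^ 2 * Real.exp (2 * s) + Real.exp (2 * t) + (a + r) ^ 2

/-- Hyperbolic distance between `(0,eᵗ)` and the point at arclength parameter `s` on the
half-circle geodesic of center `(a,0)` and radius `r`. -/
noncomputable def phiCirc (r a t s : ℝ) : ℝ :=
  arcosh (Afun r a t s / (4 * r * Real.exp (s + t)))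

/-!
With `c = 4 r e^{s+t}` we have `φ = arcosh (A / c)`, so `∂φ/∂t = (∂_t A · c − A ∂_t c) / (c √(A² − c²))`.
Since `∂_t c = c` and `A` is affine in `e^{2t}`, this simplifies to `N / √D` with `D = A² − c²` and
`N` affine in `e^{2s}`. Differentiating `N / √D` in `s` gives `(2 N' D − N D') / (2 D^{3/2})`, and
the numerator factors as claimed: in `x = e^{2s}`, `y = e^{2t}` this is a polynomial identity.
-/

open Real hiding arcosh

lemma HasDerivAt.arcosh_div {f g : ℝ → ℝ} {f' g' x : ℝ} (hf : HasDerivAt f f' x)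
    (hg : HasDerivAt g g' x) (hg0 : 0 < g x) (hgf : g x < f x) :
    HasDerivAt (fun y => arcosh (f y / g y))
      ((f' * g x - f x * g') / (g x * √(f x ^ 2 - g x ^ 2))) x := by
  have hD : 0 < f x ^ 2 - g x ^ 2 := by nlinarith
  have hsqrt : √((f x / g x) ^ 2 - 1) = √(f x ^ 2 - g x ^ 2) / g x := by
    rw [div_pow, div_sub_one (by positivity), sqrt_div' _ (sq_nonneg _), sqrt_sq hg0.le]
  -- `arcosh` and `Real.arcosh` have the same defining formula
  have harcosh : HasDerivAt arcosh (√((f x / g x) ^ 2 - 1))⁻¹ (f x / g x) :=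
    Real.hasDerivAt_arcosh ((one_lt_div hg0).mpr hgf)
  refine (harcosh.comp x (hf.div hg hg0.ne')).congr_deriv ?_
  rw [hsqrt]
  field_simp [(sqrt_pos.mpr hD).ne']

lemma HasDerivAt.div_sqrt {f g : ℝ → ℝ} {f' g' x : ℝ} (hf : HasDerivAt f f' x)
    (hg : HasDerivAt g g' x) (hg0 : 0 < g x) :
    HasDerivAt (fun y => f y / √(g y))
      ((2 * f' * g x - f x * g') / (2 * g x ^ ((3 : ℝ) / 2))) x := by
  have hrpow : g x ^ ((3 : ℝ) / 2) = g x * √(g x) := by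
    rw [show (3 : ℝ) / 2 = 1 + 1 / 2 by norm_num, rpow_add hg0, rpow_one, sqrt_eq_rpow]
  have hs : 0 < √(g x) := sqrt_pos.mpr hg0
  refine (hf.div (hg.sqrt hg0.ne') hs.ne').congr_deriv ?_
  rw [hrpow, sq_sqrt hg0.le]
  field_simp
  rw [sq_sqrt hg0.le]
  ring

lemma hasDerivAt_mul_exp_two_mul_add (p q x : ℝ) :
    HasDerivAt (fun y => p * exp (2 * y) + q) (2 * p * exp (2 * x)) x := by
  refine ((((hasDerivAt_id x).const_mul 2).exp).const_mul p).add_const q |>.congr_deriv ?_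
  simp only [id]
  ring

lemma hasDerivAt_Afun_t (r a t s : ℝ) :
    HasDerivAt (fun t' => Afun r a t' s) (2 * (exp (2 * s) + 1) * exp (2 * t)) t := by
  have hA : (fun t' => Afun r a t' s) =
      fun t' => (exp (2 * s) + 1) * exp (2 * t') + ((a - r) ^ 2 * exp (2 * s) + (a + r) ^ 2) := by
    funext t'
    rw [Afun, exp_add]
    ring
  rw [hA]
  exact hasDerivAt_mul_exp_two_mul_add _ _ t

lemma hasDerivAt_Afun_s (r a t s : ℝ) :
    HasDerivAt (fun s' => Afun r a t s') (2 * (exp (2 * t) + (a - r) ^ 2) * exp (2 * s)) s := by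
  have hA : (fun s' => Afun r a t s') =
      fun s' => (exp (2 * t) + (a - r) ^ 2) * exp (2 * s') + (exp (2 * t) + (a + r) ^ 2) := by
    funext s'
    rw [Afun, exp_add]
    ring
  rw [hA]
  exact hasDerivAt_mul_exp_two_mul_add _ _ s

/-- `A² − c²` for `c = 4 r e^{s+t}`, i.e. `c² sinh² φ`. -/
noncomputable def discr (r a t s : ℝ) : ℝ :=
  Afun r a t s ^ 2 - 16 * r ^ 2 * exp (2 * s + 2 * t)

lemma hasDerivAt_discr_s (r a t s : ℝ) :
    HasDerivAt (fun s' => discr r a t s')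
      (2 * Afun r a t s * (2 * (exp (2 * t) + (a - r) ^ 2) * exp (2 * s))
        - 32 * r ^ 2 * exp (2 * s + 2 * t)) s := by
  have hexp := (((hasDerivAt_id s).const_mul 2).add_const (2 * t)).exp.const_mul (16 * r ^ 2)
  refine ((hasDerivAt_Afun_s r a t s).pow 2).sub hexp |>.congr_deriv ?_
  simp only [id, Nat.cast_ofNat]
  ring

lemma hasDerivAt_phiCirc_t {r a t s : ℝ} (hr : 0 < r) (h : 0 < discr r a t s) :
    HasDerivAt (fun t' => phiCirc r a t' s)
      (((exp (2 * t) - (a - r) ^ 2) * exp (2 * s) + (exp (2 * t) - (a + r) ^ 2)) /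
        √(discr r a t s)) t := by
  have hc : HasDerivAt (fun t' => 4 * r * exp (s + t')) (4 * r * exp (s + t)) t := by
    simpa using ((hasDerivAt_id t).const_add s).exp.const_mul (4 * r)
  have hc0 : 0 < 4 * r * exp (s + t) := by positivity
  have hcsq : (4 * r * exp (s + t)) ^ 2 = 16 * r ^ 2 * exp (2 * s + 2 * t) := by
    rw [mul_pow, ← exp_nat_mul]
    ring_nf
  have hA0 : 0 < Afun r a t s := by unfold Afun; positivity
  have hcA : 4 * r * exp (s + t) < Afun r a t s := by
    rw [discr, ← hcsq] at h
    nlinarith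
  refine ((hasDerivAt_Afun_t r a t s).arcosh_div hc hc0 hcA).congr_deriv ?_
  rw [hcsq, ← discr, Afun, exp_add (2 * s)]
  field_simp
  ring

lemma eventually_discr_pos {r a t s : ℝ} (h : 0 < discr r a t s) :
    ∀ᶠ s' in nhds s, 0 < discr r a t s' := by
  have hcont : Continuous fun s' => discr r a t s' := by
    unfold discr Afun
    fun_prop
  exact hcont.continuousAt.eventually (eventually_gt_nhds h)

theorem stmt3 (r a t s : ℝ) (hr : 0 < r)
    (hpos : 0 < Afun r a t s ^ 2 - 16 * r ^ 2 * Real.exp (2 * s + 2 * t)) :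
    deriv (fun s' => deriv (fun t' => phiCirc r a t' s') t) s =
      16 * r * Real.exp (2 * s + 2 * t) * (a + r + (a - r) * Real.exp (2 * s)) *
          (a ^ 2 - r ^ 2 + Real.exp (2 * t)) /
        (Afun r a t s ^ 2 - 16 * r ^ 2 * Real.exp (2 * s + 2 * t)) ^ ((3 : ℝ) / 2) := by
  change 0 < discr r a t s at hpos
  change _ = _ / discr r a t s ^ _
  have hinner : (fun s' => deriv (fun t' => phiCirc r a t' s') t) =ᶠ[nhds s] fun s' =>
      ((exp (2 * t) - (a - r) ^ 2) * exp (2 * s') + (exp (2 * t) - (a + r) ^ 2)) /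
        √(discr r a t s') := by
    filter_upwards [eventually_discr_pos hpos] with s' hs'
    exact (hasDerivAt_phiCirc_t hr hs').deriv
  rw [hinner.deriv_eq, ((hasDerivAt_mul_exp_two_mul_add _ _ s).div_sqrt
    (hasDerivAt_discr_s r a t s) hpos).deriv]
  have hnumer : 2 * (2 * (exp (2 * t) - (a - r) ^ 2) * exp (2 * s)) * discr r a t s
      - ((exp (2 * t) - (a - r) ^ 2) * exp (2 * s) + (exp (2 * t) - (a + r) ^ 2))
        * (2 * Afun r a t s * (2 * (exp (2 * t) + (a - r) ^ 2) * exp (2 * s))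
          - 32 * r ^ 2 * exp (2 * s + 2 * t))
      = 2 * (16 * r * exp (2 * s + 2 * t) * (a + r + (a - r) * exp (2 * s)) *
          (a ^ 2 - r ^ 2 + exp (2 * t))) := by
    rw [discr, Afun, exp_add]
    ring
  rw [hnumer, mul_div_mul_left _ _ two_ne_zero]
end

section
/- Let T ≥ 1, r > 0, a ≥ r, and suppose t ∈ [0,1], s ∈ ℝ satisfy arcosh(A/(4re^{s+t})) ≤ T where A = e^{2s+2t} + (a−r)²e^{2s} + e^{2t} + (a+r)². Then r/(4 cosh T) ≤ eˢ ≤ 4r cosh T, a/r ≤ 2e cosh T, and |a − r| ≤ 2e cosh T. -/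
set_option maxHeartbeats 1000000 in
lemma stmt5_endgame (r a c es et : ℝ) (hr : 0 < r) (hra : r ≤ a)
    (espos : 0 < es) (etpos : 0 < et) (hc1 : (1:ℝ) ≤ c)
    (het1 : (1:ℝ) ≤ et) (hete : et ≤ Real.exp 1)
    (hA' : (es * et) ^ 2 + (a - r) ^ 2 * es ^ 2 + et ^ 2 + (a + r) ^ 2
      ≤ 4 * r * (es * et) * c) :
    r / (4 * c) ≤ es ∧ es ≤ 4 * r * c ∧
      a / r ≤ 2 * Real.exp 1 * c ∧ |a - r| ≤ 2 * Real.exp 1 * c := by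
  have cpos : (0:ℝ) < c := by linarith
  have he2 : (2:ℝ) ≤ Real.exp 1 := by
    have := Real.exp_one_gt_d9; linarith
  have he4 : Real.exp 1 ≤ 4 := by
    have := Real.exp_one_lt_d9; linarith
  have hnn1 : (0:ℝ) ≤ (a - r) ^ 2 * es ^ 2 := by positivity
  have hnn2 : (0:ℝ) ≤ et ^ 2 := sq_nonneg et
  have hnn3 : (0:ℝ) ≤ (a + r) ^ 2 := sq_nonneg _
  have hnn4 : (0:ℝ) ≤ (es * et) ^ 2 := sq_nonneg _
  have hterm1 : (es * et) ^ 2 ≤ 4 * r * (es * et) * c := by linarith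
  have hbig : es * et ≤ 4 * r * c := by
    have h' : (es * et) * (es * et) ≤ (4 * r * c) * (es * et) := by
      calc (es * et) * (es * et) = (es * et) ^ 2 := by ring
      _ ≤ 4 * r * (es * et) * c := hterm1
      _ = (4 * r * c) * (es * et) := by ring
    exact le_of_mul_le_mul_right h' (mul_pos espos etpos)
  have hterm4 : (a + r) ^ 2 ≤ 4 * r * (es * et) * c := by linarith
  have hrle : r ≤ es * et * c := by
    have h4r : (4 * r) * r ≤ (4 * r) * (es * et * c) := by
      nlinarith [hterm4, mul_nonneg (sub_nonneg.mpr hra) (by linarith : (0:ℝ) ≤ a + 3 * r)]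
    exact le_of_mul_le_mul_left h4r (by positivity)
  refine ⟨?_, ?_, ?_, ?_⟩
  · rw [div_le_iff₀ (by positivity)]
    nlinarith [mul_pos espos cpos, hrle, hete, he4]
  · nlinarith [hbig, het1, espos]
  · rw [div_le_iff₀ hr]
    have hsq : (a + r) ^ 2 ≤ 16 * r ^ 2 * c ^ 2 := by
      nlinarith [hterm4, hbig, mul_pos hr cpos]
    have har : a + r ≤ 4 * r * c := by
      nlinarith [sq_nonneg (a + r - 4 * r * c), hsq, mul_pos hr cpos]
    nlinarith [mul_pos cpos hr, he2, har]
  · rw [abs_of_nonneg (by linarith)]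
    have h4a : (a - r) ^ 2 * es ^ 2 ≤ 4 * r * (es * et) * c := by linarith
    have h4mid : 4 * r * (es * et) * c ≤ (4 * et ^ 2 * c ^ 2) * es ^ 2 := by
      calc 4 * r * (es * et) * c = r * (4 * (es * et) * c) := by ring
      _ ≤ (es * et * c) * (4 * (es * et) * c) :=
        mul_le_mul_of_nonneg_right hrle (by positivity)
      _ = (4 * et ^ 2 * c ^ 2) * es ^ 2 := by ring
    have h4b : (a - r) ^ 2 ≤ 4 * et ^ 2 * c ^ 2 := by
      have h' : (a - r) ^ 2 * es ^ 2 ≤ (4 * et ^ 2 * c ^ 2) * es ^ 2 := le_trans h4a h4mid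
      exact le_of_mul_le_mul_right h' (by positivity)
    have h4c : (a - r) ^ 2 ≤ (2 * Real.exp 1 * c) ^ 2 := by
      calc (a - r) ^ 2 ≤ 4 * et ^ 2 * c ^ 2 := h4b
      _ ≤ 4 * (Real.exp 1) ^ 2 * c ^ 2 := by
        have h1 : et ^ 2 ≤ (Real.exp 1) ^ 2 := pow_le_pow_left₀ etpos.le hete 2
        have h2 := mul_le_mul_of_nonneg_right h1 (show (0:ℝ) ≤ 4 * c ^ 2 by positivity)
        nlinarith [h2]
      _ = (2 * Real.exp 1 * c) ^ 2 := by ring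
    calc a - r = Real.sqrt ((a - r) ^ 2) := (Real.sqrt_sq (by linarith)).symm
    _ ≤ Real.sqrt ((2 * Real.exp 1 * c) ^ 2) := Real.sqrt_le_sqrt h4c
    _ = 2 * Real.exp 1 * c := Real.sqrt_sq (by positivity)

set_option maxHeartbeats 1000000 in
theorem stmt5 (T r a t s : ℝ) (hT : 1 ≤ T) (hr : 0 < r) (hra : r ≤ a)
    (ht : t ∈ Set.Icc (0 : ℝ) 1)
    (h : arcosh (Afun r a t s / (4 * r * Real.exp (s + t))) ≤ T) :
    r / (4 * Real.cosh T) ≤ Real.exp s ∧ Real.exp s ≤ 4 * r * Real.cosh T ∧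
      a / r ≤ 2 * Real.exp 1 * Real.cosh T ∧ |a - r| ≤ 2 * Real.exp 1 * Real.cosh T := by
  obtain ⟨ht0, ht1⟩ := ht
  have her : (0:ℝ) < Real.exp (s + t) := Real.exp_pos _
  have hE : (0:ℝ) < 4 * r * Real.exp (s + t) := by positivity
  set A := Afun r a t s with hAdef
  set X := A / (4 * r * Real.exp (s + t)) with hXdef
  have hesq : Real.exp (s + t) * Real.exp (s + t) = Real.exp (2 * s + 2 * t) := by
    rw [← Real.exp_add]; ring_nf
  have hApos0 : 4 * r * Real.exp (s + t) ≤ A := by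
    simp only [hAdef, Afun]
    nlinarith [sq_nonneg (Real.exp (s + t) - (a + r)), Real.exp_pos (2 * s),
      Real.exp_pos (2 * t), sq_nonneg (a - r), mul_pos hr her]
  have hX1 : 1 ≤ X := (one_le_div hE).mpr hApos0
  have hq0 : (0:ℝ) ≤ X ^ 2 - 1 := by nlinarith
  set q := Real.sqrt (X ^ 2 - 1) with hqdef
  have hq : q ^ 2 = X ^ 2 - 1 := Real.sq_sqrt hq0
  have hqnn : 0 ≤ q := Real.sqrt_nonneg _
  have hy : X + q ≤ Real.exp T := by
    have hypos : 0 < X + q := by linarith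
    have h' := h
    unfold arcosh at h'
    calc X + q = Real.exp (Real.log (X + q)) := (Real.exp_log hypos).symm
    _ ≤ Real.exp T := Real.exp_le_exp.mpr h'
  have hXc : X ≤ Real.cosh T := by
    have hexpT : (1:ℝ) ≤ Real.exp T := by
      have : Real.exp 0 ≤ Real.exp T := Real.exp_le_exp.mpr (by linarith)
      simpa using this
    have hmul : Real.exp T * Real.exp (-T) = 1 := by
      rw [← Real.exp_add]; simp
    have hemT : Real.exp (-T) ≤ 1 := Real.exp_le_one_iff.mpr (by linarith)
    have hyge : (1:ℝ) ≤ X + q := by linarith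
    have hprod : (X + q - Real.exp T) * (X + q - Real.exp (-T)) ≤ 0 :=
      mul_nonpos_of_nonpos_of_nonneg (by linarith) (by linarith)
    rw [Real.cosh_eq]
    nlinarith [hyge, hprod, hmul, hq]
  have hA : A ≤ Real.cosh T * (4 * r * Real.exp (s + t)) := (div_le_iff₀ hE).mp hXc
  -- abbreviations
  set es := Real.exp s with hes
  set et := Real.exp t with het
  set c := Real.cosh T with hcc
  have espos : (0:ℝ) < es := Real.exp_pos s
  have etpos : (0:ℝ) < et := Real.exp_pos t
  have hc1 : (1:ℝ) ≤ c := Real.one_le_cosh T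
  have cpos : (0:ℝ) < c := by linarith
  have het1 : (1:ℝ) ≤ et := by
    have : Real.exp 0 ≤ Real.exp t := Real.exp_le_exp.mpr ht0
    simpa [het] using this
  have hete : et ≤ Real.exp 1 := Real.exp_le_exp.mpr ht1
  have he2 : (2:ℝ) ≤ Real.exp 1 := by
    have := Real.exp_one_gt_d9; linarith
  have he4 : Real.exp 1 ≤ 4 := by
    have := Real.exp_one_lt_d9; linarith
  have hst : Real.exp (s + t) = es * et := Real.exp_add s t
  have h2st : Real.exp (2 * s + 2 * t) = (es * et) ^ 2 := by
    rw [← hesq, hst]; ring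
  have h2s : Real.exp (2 * s) = es ^ 2 := by
    rw [two_mul, Real.exp_add]; ring
  have h2t : Real.exp (2 * t) = et ^ 2 := by
    rw [two_mul, Real.exp_add]; ring
  have hA' : (es * et) ^ 2 + (a - r) ^ 2 * es ^ 2 + et ^ 2 + (a + r) ^ 2
      ≤ 4 * r * (es * et) * c := by
    have := hA
    simp only [hAdef, Afun, h2st, h2s, h2t, hst] at this
    linarith
  exact stmt5_endgame r a c es et hr hra espos etpos hc1 het1 hete hA'
end

section
/- Let r > 0, a ∈ ℝ, t, s ∈ ℝ, and A = e^{2s+2t} + (a−r)²e^{2s} + e^{2t} + (a+r)². Then A − 4re^{s+t} ≥ (e^{2t} + a² − r²)²/(e^{2t} + (a−r)²). In particular if e^{2t} ≠ r² − a², then A > 4re^{s+t} and hence A² − 16r²e^{2s+2t} > 0. -/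
theorem stmt6 (r a t s : ℝ) (hr : 0 < r) :
    (Real.exp (2 * t) + a ^ 2 - r ^ 2) ^ 2 / (Real.exp (2 * t) + (a - r) ^ 2) ≤
      Afun r a t s - 4 * r * Real.exp (s + t) ∧
    (Real.exp (2 * t) ≠ r ^ 2 - a ^ 2 →
      4 * r * Real.exp (s + t) < Afun r a t s ∧
      0 < Afun r a t s ^ 2 - 16 * r ^ 2 * Real.exp (2 * s + 2 * t)) := by
  set X := Real.exp s with hX
  set Y := Real.exp t with hY
  have hXpos : 0 < X := Real.exp_pos s
  have hYpos : 0 < Y := Real.exp_pos t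
  have h2s : Real.exp (2 * s) = X ^ 2 := by rw [hX, ← Real.exp_nat_mul]; ring_nf
  have h2t : Real.exp (2 * t) = Y ^ 2 := by rw [hY, ← Real.exp_nat_mul]; ring_nf
  have hst : Real.exp (s + t) = X * Y := Real.exp_add s t
  have h2st : Real.exp (2 * s + 2 * t) = X ^ 2 * Y ^ 2 := by
    rw [Real.exp_add, h2s, h2t]
  have hD : 0 < Y ^ 2 + (a - r) ^ 2 := by positivity
  have key : (Y ^ 2 + a ^ 2 - r ^ 2) ^ 2 / (Y ^ 2 + (a - r) ^ 2) ≤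
      Afun r a t s - 4 * r * (X * Y) := by
    rw [div_le_iff₀ hD, Afun, h2s, h2st]
    nlinarith [sq_nonneg ((Y ^ 2 + (a - r) ^ 2) * X - 2 * r * Y), sq_nonneg (X * Y - X * Y),
      mul_pos hD hD, sq_nonneg (Y*(X-1)), sq_nonneg ((a-r)*X)]
  constructor
  · rw [h2t, hst]; exact key
  · intro hne
    have hne' : Y ^ 2 + a ^ 2 - r ^ 2 ≠ 0 := by
      rw [h2t] at hne; intro h; apply hne; linarith
    have hpos : 0 < (Y ^ 2 + a ^ 2 - r ^ 2) ^ 2 / (Y ^ 2 + (a - r) ^ 2) :=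
      div_pos (by positivity) hD
    have hlt : 4 * r * Real.exp (s + t) < Afun r a t s := by
      rw [hst]; linarith
    refine ⟨hlt, ?_⟩
    have hApos : 0 < Afun r a t s := lt_trans (by rw [hst]; positivity) hlt
    rw [h2st]
    rw [hst] at hlt
    have h1 : 0 < Afun r a t s - 4 * r * (X * Y) := by linarith
    have h2 : 0 < Afun r a t s + 4 * r * (X * Y) := by positivity
    nlinarith [mul_pos h1 h2]
end

section
/- Let a ≥ r > 0 and suppose r ≥ 4√((cosh R + 1)/(cosh R − 1))·cosh T and |a − r| ≤ √(cosh²R − 1)/(4 cosh T) for some R > 0, T ≥ 1 with a/r ≤ cosh R and a ≠ r. Define u± = (√(cosh²R − 1) ± √(cosh²R − (a/r)²))/(a/r − 1). Then u₋ ≤ r/(4 cosh T) and 4r cosh T ≤ u₊. -/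
/-!
With `t = a / r`, `S = √(cosh² R - 1)` and `S' = √(cosh² R - t²)`, the numbers `u±` are the
roots of `(t - 1) u² - 2 S u + (t + 1)`. Rationalising, `u₋ = (t + 1) / (S + S')`, which is at
most `(cosh R + 1) / S = √((cosh R + 1) / (cosh R - 1))` because `t ≤ cosh R`; the first
hypothesis bounds this by `r / (4 cosh T)`. On the other side `u₊ ≥ S / (t - 1)`, and since
`r (t - 1) = a - r` the second hypothesis says exactly that this is at least `4 r cosh T`.
-/

open Real

lemma sqrt_add_one_div_sub_one_eq {c : ℝ} (hc : 0 ≤ c + 1) :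
    √((c + 1) / (c - 1)) = (c + 1) / √(c ^ 2 - 1) := by
  rcases hc.eq_or_lt with hc | hc
  · simp [← hc]
  calc √((c + 1) / (c - 1)) = √((c + 1) ^ 2 / (c ^ 2 - 1)) := by
        congr 1
        rw [show c ^ 2 - 1 = (c + 1) * (c - 1) by ring, pow_two, mul_div_mul_left _ _ hc.ne']
    _ = (c + 1) / √(c ^ 2 - 1) := by rw [sqrt_div (sq_nonneg _), sqrt_sq hc.le]

lemma sqrt_sub_sqrt_div_le {c t : ℝ} (ht : 1 < t) (htc : t ≤ c) :
    (√(c ^ 2 - 1) - √(c ^ 2 - t ^ 2)) / (t - 1) ≤ (c + 1) / √(c ^ 2 - 1) := by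
  have hS : 0 < √(c ^ 2 - 1) := sqrt_pos.2 (by nlinarith)
  have hS' : 0 ≤ √(c ^ 2 - t ^ 2) := sqrt_nonneg _
  have hprod : (√(c ^ 2 - 1) - √(c ^ 2 - t ^ 2)) * (√(c ^ 2 - 1) + √(c ^ 2 - t ^ 2))
      = (t - 1) * (t + 1) := by
    rw [mul_comm, ← sq_sub_sq, sq_sqrt (by nlinarith), sq_sqrt (by nlinarith)]
    ring
  calc (√(c ^ 2 - 1) - √(c ^ 2 - t ^ 2)) / (t - 1)
      = (t + 1) / (√(c ^ 2 - 1) + √(c ^ 2 - t ^ 2)) := by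
        rw [div_eq_div_iff (by linarith) (by positivity), hprod]
        ring
    _ ≤ (t + 1) / √(c ^ 2 - 1) := by gcongr; linarith
    _ ≤ (c + 1) / √(c ^ 2 - 1) := by gcongr

theorem stmt8_general (a r R T : ℝ) (hr : 0 < r) (hra : r ≤ a)
    (hcr : a / r ≤ Real.cosh R) (hne : a ≠ r)
    (h1 : 4 * Real.sqrt ((Real.cosh R + 1) / (Real.cosh R - 1)) * Real.cosh T ≤ r)
    (h2 : |a - r| ≤ Real.sqrt (Real.cosh R ^ 2 - 1) / (4 * Real.cosh T)) :
    (Real.sqrt (Real.cosh R ^ 2 - 1) - Real.sqrt (Real.cosh R ^ 2 - (a / r) ^ 2)) /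
        (a / r - 1) ≤ r / (4 * Real.cosh T) ∧
    4 * r * Real.cosh T ≤
      (Real.sqrt (Real.cosh R ^ 2 - 1) + Real.sqrt (Real.cosh R ^ 2 - (a / r) ^ 2)) /
        (a / r - 1) := by
  have ht : 1 < a / r := (one_lt_div hr).2 (hra.lt_of_ne hne.symm)
  have hK : 0 < cosh T := cosh_pos T
  constructor
  · calc _ ≤ (cosh R + 1) / √(cosh R ^ 2 - 1) := sqrt_sub_sqrt_div_le ht hcr
      _ = √((cosh R + 1) / (cosh R - 1)) :=
        (sqrt_add_one_div_sub_one_eq (by linarith [one_le_cosh R])).symm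
      _ ≤ r / (4 * cosh T) := by rw [le_div_iff₀ (by positivity)]; linarith
  · rw [abs_of_nonneg (sub_nonneg.2 hra), le_div_iff₀ (by positivity)] at h2
    rw [le_div_iff₀ (by linarith)]
    calc 4 * r * cosh T * (a / r - 1) = (a - r) * (4 * cosh T) := by field_simp
      _ ≤ √(cosh R ^ 2 - 1) + √(cosh R ^ 2 - (a / r) ^ 2) := by
        linarith [sqrt_nonneg (cosh R ^ 2 - (a / r) ^ 2)]

theorem stmt8 (a r R T : ℝ) (hr : 0 < r) (hra : r ≤ a) (hR : 0 < R) (hT : 1 ≤ T)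
    (hcr : a / r ≤ Real.cosh R) (hne : a ≠ r)
    (h1 : 4 * Real.sqrt ((Real.cosh R + 1) / (Real.cosh R - 1)) * Real.cosh T ≤ r)
    (h2 : |a - r| ≤ Real.sqrt (Real.cosh R ^ 2 - 1) / (4 * Real.cosh T)) :
    (Real.sqrt (Real.cosh R ^ 2 - 1) - Real.sqrt (Real.cosh R ^ 2 - (a / r) ^ 2)) /
        (a / r - 1) ≤ r / (4 * Real.cosh T) ∧
    4 * r * Real.cosh T ≤
      (Real.sqrt (Real.cosh R ^ 2 - 1) + Real.sqrt (Real.cosh R ^ 2 - (a / r) ^ 2)) /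
        (a / r - 1) :=
  stmt8_general a r R T hr hra hcr hne h1 h2
end
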